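/- Give B_n × B_n (Boolean lattices) the Segre product order on pairs (S,T) with |S| = |T|, and give B_n(q) ∘ B_n(q) the analogous structure. The maximal chains of the Segre product B_n ∘ B_n from (∅,∅) to ([n],[n]) are in bijection with pairs (σ,τ) ∈ S_n × S_n, via recording at each step the new element added to each coordinate; under this bijection, the strictly decreasing maximal chains (those whose label pairs (σ(i), τ(i)) are such that no i is an ascent of both σ and τ) are exactly the pairs with no common ascent, and their number is |D_n| = W_n(1). -/
import Mathlib


open Finset

/-- A common ascent of a pair of permutations of `{1,...,n}`:
an index `i` with `i+1 = j ≤ n` such that both permutations increase from `i` to `j`. -/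
def CommonAscent {n : ℕ} (σ τ : Equiv.Perm (Fin n)) : Prop :=
  ∃ i j : Fin n, (i : ℕ) + 1 = (j : ℕ) ∧ σ i < σ j ∧ τ i < τ j

instance {n : ℕ} : DecidablePred
    (fun p : Equiv.Perm (Fin n) × Equiv.Perm (Fin n) => CommonAscent p.1 p.2) := fun _ => by
  unfold CommonAscent; infer_instance

/-- The number of inversions of a permutation. -/
def inversions {n : ℕ} (σ : Equiv.Perm (Fin n)) : ℕ :=
  (Finset.univ.filter (fun p : Fin n × Fin n => p.1 < p.2 ∧ σ p.2 < σ p.1)).card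

/-- `W n = ∑ q^(inv σ + inv τ)` over pairs of permutations with no common ascent,
as a polynomial in `q`. -/
noncomputable def W (n : ℕ) : Polynomial ℚ :=
  ∑ p ∈ Finset.univ.filter
      (fun p : Equiv.Perm (Fin n) × Equiv.Perm (Fin n) => ¬ CommonAscent p.1 p.2),
    Polynomial.X ^ (inversions p.1 + inversions p.2)

/-- Maximal chains of the Segre product `B_n ∘ B_n` from `(∅,∅)` to `([n],[n])`:
pairs of equal-cardinality subsets where each step adds one element to each coordinate. -/
def SegreChain (n : ℕ) : Type :=
  {c : Fin (n + 1) → Finset (Fin n) × Finset (Fin n) //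
    c 0 = (∅, ∅) ∧ c (Fin.last n) = (Finset.univ, Finset.univ) ∧
    ∀ i : Fin n, (c i.castSucc).1 ⊆ (c i.succ).1 ∧ (c i.castSucc).2 ⊆ (c i.succ).2 ∧
      (c i.succ).1.card = (i : ℕ) + 1 ∧ (c i.succ).2.card = (i : ℕ) + 1}

/-- A chain has an ascent if at two consecutive steps the newly added labels increase in
both coordinates. A chain is (strictly) decreasing iff it has no ascent. -/
def ChainAscent {n : ℕ} (c : Fin (n + 1) → Finset (Fin n) × Finset (Fin n)) : Prop :=
  ∃ i j : Fin n, (i : ℕ) + 1 = (j : ℕ) ∧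
    (∃ a ∈ (c i.succ).1 \ (c i.castSucc).1, ∃ b ∈ (c j.succ).1 \ (c j.castSucc).1, a < b) ∧
    (∃ a ∈ (c i.succ).2 \ (c i.castSucc).2, ∃ b ∈ (c j.succ).2 \ (c j.castSucc).2, a < b)

namespace SegreAux

variable {n : ℕ}

/-- The new element added at step `i` of a chain of finsets. -/
noncomputable def newElt (f : Fin (n + 1) → Finset (Fin n)) (i : Fin n) : Fin n :=
  if h : (f i.succ \ f i.castSucc).Nonempty then h.choose else i

section Single

variable {f : Fin (n + 1) → Finset (Fin n)}
variable (h0 : f 0 = ∅)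
variable (hsub : ∀ i : Fin n, f i.castSucc ⊆ f i.succ)
variable (hcard : ∀ i : Fin n, (f i.succ).card = (i : ℕ) + 1)

include h0 hcard in
lemma card_all (k : Fin (n + 1)) : (f k).card = (k : ℕ) := by
  induction k using Fin.cases with
  | zero => simp [h0]
  | succ i => simpa using hcard i

include h0 hsub hcard in
lemma diff_card (i : Fin n) : (f i.succ \ f i.castSucc).card = 1 := by
  rw [card_sdiff_of_subset (hsub i), hcard, card_all h0 hcard]
  simp

include h0 hsub hcard in
lemma diff_eq (i : Fin n) : f i.succ \ f i.castSucc = {newElt f i} := by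
  obtain ⟨a, ha⟩ := Finset.card_eq_one.mp (diff_card h0 hsub hcard i)
  have hne : (f i.succ \ f i.castSucc).Nonempty := ⟨a, by simp [ha]⟩
  have key : ∀ x ∈ f i.succ \ f i.castSucc, x = a := fun x hx => by
    rw [ha] at hx; exact Finset.mem_singleton.mp hx
  have : newElt f i = a := by
    unfold newElt
    rw [dif_pos hne]
    exact key _ hne.choose_spec
  rw [ha, this]

include h0 hsub hcard in
lemma mem_diff_iff {a : Fin n} (i : Fin n) :
    a ∈ f i.succ \ f i.castSucc ↔ a = newElt f i := by
  rw [diff_eq h0 hsub hcard, Finset.mem_singleton]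

include hsub in
lemma fmono : Monotone f := Fin.monotone_iff_le_succ.mpr hsub

include h0 hsub hcard in
lemma newElt_injective : Function.Injective (newElt f) := by
  intro i j hij
  by_contra hne
  wlog hlt : i < j generalizing i j
  · exact this hij.symm (Ne.symm hne) (lt_of_le_of_ne (not_lt.mp hlt) (Ne.symm hne))
  have h1 : newElt f i ∈ f i.succ := by
    have := (mem_diff_iff h0 hsub hcard (a := newElt f i) i).mpr rfl
    exact (Finset.mem_sdiff.mp this).1
  have h2 : newElt f j ∉ f j.castSucc := by
    have := (mem_diff_iff h0 hsub hcard (a := newElt f j) j).mpr rfl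
    exact (Finset.mem_sdiff.mp this).2
  have hle : i.succ ≤ j.castSucc := by
    rw [Fin.le_def]
    simp only [Fin.val_succ, Fin.coe_castSucc]
    omega
  exact h2 (hij ▸ (fmono hsub hle h1))

include h0 hsub hcard in
lemma newElt_bijective : Function.Bijective (newElt f) :=
  Finite.injective_iff_bijective.mp (newElt_injective h0 hsub hcard)

include h0 hsub hcard in
lemma insert_newElt (i : Fin n) : f i.succ = insert (newElt f i) (f i.castSucc) := by
  ext a
  simp only [Finset.mem_insert]
  constructor
  · intro ha
    by_cases h : a ∈ f i.castSucc
    · exact Or.inr h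
    · exact Or.inl ((mem_diff_iff h0 hsub hcard i).mp (Finset.mem_sdiff.mpr ⟨ha, h⟩))
  · rintro (rfl | h)
    · exact (Finset.mem_sdiff.mp ((mem_diff_iff h0 hsub hcard i).mpr rfl)).1
    · exact hsub i h

end Single

/-- The chain associated to a permutation. -/
def chainOf (σ : Equiv.Perm (Fin n)) (k : Fin (n + 1)) : Finset (Fin n) :=
  ((Finset.range (k : ℕ)).attachFin (fun m hm => by
    simp only [Finset.mem_range] at hm; omega)).image σ

lemma mem_chainOf {σ : Equiv.Perm (Fin n)} {k : Fin (n + 1)} {a : Fin n} :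
    a ∈ chainOf σ k ↔ ∃ j : Fin n, (j : ℕ) < (k : ℕ) ∧ σ j = a := by
  simp [chainOf, Finset.mem_image, Finset.mem_attachFin]

lemma chainOf_zero (σ : Equiv.Perm (Fin n)) : chainOf σ 0 = ∅ := by
  ext a; rw [mem_chainOf]; simp

lemma chainOf_last (σ : Equiv.Perm (Fin n)) : chainOf σ (Fin.last n) = Finset.univ := by
  ext a
  rw [mem_chainOf]
  simp only [Finset.mem_univ, iff_true]
  exact ⟨σ.symm a, by simp [Fin.is_lt]⟩

lemma chainOf_subset (σ : Equiv.Perm (Fin n)) (i : Fin n) :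
    chainOf σ i.castSucc ⊆ chainOf σ i.succ := by
  intro a ha
  rw [mem_chainOf] at ha ⊢
  obtain ⟨j, hj, rfl⟩ := ha
  exact ⟨j, by simp at hj ⊢; omega, rfl⟩

lemma chainOf_card (σ : Equiv.Perm (Fin n)) (k : Fin (n + 1)) :
    (chainOf σ k).card = (k : ℕ) := by
  rw [chainOf, Finset.card_image_of_injective _ σ.injective, Finset.card_attachFin,
    Finset.card_range]

lemma chainOf_succ (σ : Equiv.Perm (Fin n)) (i : Fin n) :
    chainOf σ i.succ = insert (σ i) (chainOf σ i.castSucc) := by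
  ext a
  rw [mem_chainOf, Finset.mem_insert, mem_chainOf]
  simp only [Fin.val_succ, Fin.coe_castSucc]
  constructor
  · rintro ⟨j, hj, rfl⟩
    rcases lt_or_eq_of_le (Nat.lt_succ_iff.mp hj) with h | h
    · exact Or.inr ⟨j, h, rfl⟩
    · exact Or.inl (by rw [show j = i from Fin.ext h])
  · rintro (rfl | ⟨j, hj, rfl⟩)
    · exact ⟨i, by omega, rfl⟩
    · exact ⟨j, by omega, rfl⟩

lemma chainOf_diff (σ : Equiv.Perm (Fin n)) (i : Fin n) :
    chainOf σ i.succ \ chainOf σ i.castSucc = {σ i} := by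
  ext a
  rw [Finset.mem_sdiff, Finset.mem_singleton, mem_chainOf, mem_chainOf]
  simp only [Fin.val_succ, Fin.coe_castSucc]
  constructor
  · rintro ⟨⟨j, hj, rfl⟩, h2⟩
    rcases lt_or_eq_of_le (Nat.lt_succ_iff.mp hj) with h | h
    · exact absurd ⟨j, h, rfl⟩ h2
    · rw [show j = i from Fin.ext h]
  · rintro rfl
    refine ⟨⟨i, by omega, rfl⟩, ?_⟩
    rintro ⟨j, hj, hja⟩
    have : j = i := σ.injective hja
    omega

lemma chainOf_eq {σ : Equiv.Perm (Fin n)} {f : Fin (n + 1) → Finset (Fin n)}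
    (h0 : f 0 = ∅) (hsub : ∀ i : Fin n, f i.castSucc ⊆ f i.succ)
    (hcard : ∀ i : Fin n, (f i.succ).card = (i : ℕ) + 1)
    (hσ : ∀ i, σ i = newElt f i) (k : Fin (n + 1)) : chainOf σ k = f k := by
  obtain ⟨m, hm⟩ := k
  induction m with
  | zero => rw [show (⟨0, hm⟩ : Fin (n + 1)) = 0 from rfl, chainOf_zero, h0]
  | succ m ih =>
    have hmn : m < n := by omega
    have hsucc : (⟨m + 1, hm⟩ : Fin (n + 1)) = (⟨m, hmn⟩ : Fin n).succ := rfl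
    have hcast : (⟨m, by omega⟩ : Fin (n + 1)) = (⟨m, hmn⟩ : Fin n).castSucc := rfl
    rw [hsucc, chainOf_succ, insert_newElt h0 hsub hcard, ← hσ, ← hcast,
      ih (by omega)]

lemma newElt_chainOf (σ : Equiv.Perm (Fin n)) (i : Fin n) :
    newElt (chainOf σ) i = σ i := by
  refine ((mem_diff_iff (chainOf_zero σ) (chainOf_subset σ) ?_ i).mp ?_).symm
  · intro j; rw [chainOf_card]; simp
  · rw [chainOf_diff]; simp

noncomputable def segreEquiv (n : ℕ) :
    SegreChain n ≃ Equiv.Perm (Fin n) × Equiv.Perm (Fin n) where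
  toFun c :=
    (Equiv.ofBijective _
      (newElt_bijective (f := fun k => (c.1 k).1)
        (by show (c.1 0).1 = ∅; rw [c.2.1]) (fun i => (c.2.2.2 i).1)
        (fun i => (c.2.2.2 i).2.2.1)),
     Equiv.ofBijective _
      (newElt_bijective (f := fun k => (c.1 k).2)
        (by show (c.1 0).2 = ∅; rw [c.2.1]) (fun i => (c.2.2.2 i).2.1)
        (fun i => (c.2.2.2 i).2.2.2)))
  invFun p :=
    ⟨fun k => (chainOf p.1 k, chainOf p.2 k),
      by simp [chainOf_zero, Prod.ext_iff],
      by simp [chainOf_last, Prod.ext_iff],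
      fun i => ⟨chainOf_subset p.1 i, chainOf_subset p.2 i,
        by rw [chainOf_card]; simp, by rw [chainOf_card]; simp⟩⟩
  left_inv c := by
    apply Subtype.ext
    funext k
    exact Prod.ext
      (chainOf_eq (f := fun k => (c.1 k).1) (by show (c.1 0).1 = ∅; rw [c.2.1]) (fun i => (c.2.2.2 i).1)
        (fun i => (c.2.2.2 i).2.2.1) (fun i => rfl) k)
      (chainOf_eq (f := fun k => (c.1 k).2) (by show (c.1 0).2 = ∅; rw [c.2.1]) (fun i => (c.2.2.2 i).2.1)
        (fun i => (c.2.2.2 i).2.2.2) (fun i => rfl) k)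
  right_inv p := Prod.ext (Equiv.ext fun i => newElt_chainOf p.1 i)
    (Equiv.ext fun i => newElt_chainOf p.2 i)

lemma segreEquiv_fst (c : SegreChain n) (i : Fin n) :
    (segreEquiv n c).1 i = newElt (fun k => (c.1 k).1) i := rfl

lemma segreEquiv_snd (c : SegreChain n) (i : Fin n) :
    (segreEquiv n c).2 i = newElt (fun k => (c.1 k).2) i := rfl

lemma ascent_iff (c : SegreChain n) :
    ChainAscent c.1 ↔ CommonAscent (segreEquiv n c).1 (segreEquiv n c).2 := by
  unfold ChainAscent CommonAscent
  refine exists_congr fun i => exists_congr fun j => and_congr_right fun _ => ?_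
  rw [diff_eq (f := fun k => (c.1 k).1) (by show (c.1 0).1 = ∅; rw [c.2.1]) (fun i => (c.2.2.2 i).1)
      (fun i => (c.2.2.2 i).2.2.1) i,
    diff_eq (f := fun k => (c.1 k).1) (by show (c.1 0).1 = ∅; rw [c.2.1]) (fun i => (c.2.2.2 i).1)
      (fun i => (c.2.2.2 i).2.2.1) j,
    diff_eq (f := fun k => (c.1 k).2) (by show (c.1 0).2 = ∅; rw [c.2.1]) (fun i => (c.2.2.2 i).2.1)
      (fun i => (c.2.2.2 i).2.2.2) i,
    diff_eq (f := fun k => (c.1 k).2) (by show (c.1 0).2 = ∅; rw [c.2.1]) (fun i => (c.2.2.2 i).2.1)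
      (fun i => (c.2.2.2 i).2.2.2) j]
  simp [segreEquiv_fst, segreEquiv_snd]

end SegreAux


/-- the maximal chains of `B_n ∘ B_n` are in bijection with pairs of
permutations, recording at each step the new element added in each coordinate; under
this bijection the decreasing maximal chains correspond exactly to the pairs with no
common ascent, and their number is `|D_n| = W_n(1)`. -/
theorem segre_chains_bijection (n : ℕ) :
    ∃ e : SegreChain n ≃ Equiv.Perm (Fin n) × Equiv.Perm (Fin n),
      (∀ c : SegreChain n, ∀ i : Fin n,
        (e c).1 i ∈ (c.1 i.succ).1 \ (c.1 i.castSucc).1 ∧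
        (e c).2 i ∈ (c.1 i.succ).2 \ (c.1 i.castSucc).2) ∧
      (∀ c : SegreChain n, ¬ ChainAscent c.1 ↔ ¬ CommonAscent (e c).1 (e c).2) ∧
      (Nat.card {c : SegreChain n // ¬ ChainAscent c.1} : ℚ) = (W n).eval 1 := by
  classical
  refine ⟨SegreAux.segreEquiv n, fun c i => ?_, fun c => not_congr (SegreAux.ascent_iff c), ?_⟩
  · constructor
    · rw [SegreAux.segreEquiv_fst]
      exact (SegreAux.mem_diff_iff (f := fun k => (c.1 k).1) (by show (c.1 0).1 = ∅; rw [c.2.1])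
        (fun i => (c.2.2.2 i).1) (fun i => (c.2.2.2 i).2.2.1) i).mpr rfl
    · rw [SegreAux.segreEquiv_snd]
      exact (SegreAux.mem_diff_iff (f := fun k => (c.1 k).2) (by show (c.1 0).2 = ∅; rw [c.2.1])
        (fun i => (c.2.2.2 i).2.1) (fun i => (c.2.2.2 i).2.2.2) i).mpr rfl
  · have e2 : {c : SegreChain n // ¬ ChainAscent c.1} ≃
        {p : Equiv.Perm (Fin n) × Equiv.Perm (Fin n) // ¬ CommonAscent p.1 p.2} :=
      (SegreAux.segreEquiv n).subtypeEquiv fun c => not_congr (SegreAux.ascent_iff c)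
    rw [Nat.card_congr e2, Nat.card_eq_fintype_card, Fintype.card_subtype]
    rw [W, Polynomial.eval_finset_sum]
    simp
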